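/- arXiv:math/0401351 — 15 statements merged into one kernel-verified Lean document; each statement's English description precedes it below -/
import Mathlib

section
/- Let G be a group and x1, x2, x3 ∈ G. Then the three relations x1 = x3 x2 x1 x2⁻¹ x3⁻¹, x2 = x3 x2 x1 x3 x2 x3⁻¹ x1⁻¹ x2⁻¹ x3⁻¹, and x3 = x3 x2 x1 x3 x2 x3 x2⁻¹ x3⁻¹ x1⁻¹ x2⁻¹ x3⁻¹ hold simultaneously if and only if the two relations x1 x3 x2 = x3 x2 x1 and x3 x2 x1 x3 x2 = x2 x3 x2 x1 x3 hold. -/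
theorem stmt_0 {G : Type*} [Group G] (x1 x2 x3 : G) :
    (x1 = x3 * x2 * x1 * x2⁻¹ * x3⁻¹ ∧
     x2 = x3 * x2 * x1 * x3 * x2 * x3⁻¹ * x1⁻¹ * x2⁻¹ * x3⁻¹ ∧
     x3 = x3 * x2 * x1 * x3 * x2 * x3 * x2⁻¹ * x3⁻¹ * x1⁻¹ * x2⁻¹ * x3⁻¹) ↔
    (x1 * x3 * x2 = x3 * x2 * x1 ∧
     x3 * x2 * x1 * x3 * x2 = x2 * x3 * x2 * x1 * x3) := by
  simp only [eq_mul_inv_iff_mul_eq]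
  constructor
  · rintro ⟨h1, h2, h3⟩
    exact ⟨h1, h2.symm⟩
  · rintro ⟨r1, r2⟩
    refine ⟨r1, r2.symm, ?_⟩
    calc x3 * x3 * x2 * x1 * x3 * x2
        = x3 * (x3 * x2 * x1 * x3 * x2) := by group
      _ = x3 * (x2 * x3 * x2 * x1 * x3) := by rw [r2]
      _ = x3 * x2 * (x3 * x2 * x1) * x3 := by group
      _ = x3 * x2 * (x1 * x3 * x2) * x3 := by rw [r1]
      _ = x3 * x2 * x1 * x3 * x2 * x3 := by group
end

section
/- Let G be a group and x1, x2, x3 ∈ G. If x1 x3 x2 = x3 x2 x1 and x3 x2 x1 x3 x2 = x2 x3 x2 x1 x3, then x2 x1 x3 x2 x3 = x3 x2 x1 x3 x2 (i.e., the third van Kampen relation x3 = x3 x2 x1 x3 x2 x3 x2⁻¹ x3⁻¹ x1⁻¹ x2⁻¹ x3⁻¹ is redundant). -/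
theorem stmt_1 {G : Type*} [Group G] (x1 x2 x3 : G)
    (h1 : x1 * x3 * x2 = x3 * x2 * x1)
    (h2 : x3 * x2 * x1 * x3 * x2 = x2 * x3 * x2 * x1 * x3) :
    x2 * x1 * x3 * x2 * x3 = x3 * x2 * x1 * x3 * x2 := by
  calc x2 * x1 * x3 * x2 * x3 = x2 * (x1 * x3 * x2) * x3 := by group
    _ = x2 * (x3 * x2 * x1) * x3 := by rw [h1]
    _ = x2 * x3 * x2 * x1 * x3 := by group
    _ = x3 * x2 * x1 * x3 * x2 := h2.symm
end

section
/- Let G be a group and x1, x2, x3, x4, x5 ∈ G. Then the five relations x1 = x4 x3 x4⁻¹, x2 = x4 x3 x2 x3⁻¹ x4⁻¹, x3 = x4 x3 x2 x1 x2⁻¹ x3⁻¹ x4⁻¹, x4 = x5, and x5 = x5 x4 x3 x2 x1 x4 x1⁻¹ x2⁻¹ x3⁻¹ x4⁻¹ x5⁻¹ hold simultaneously if and only if the four relations x4 x3 x2 = x2 x4 x3, x3 x2 x4 x3 x4 = x4 x3 x2 x4 x3, x1 = x4 x3 x4⁻¹, and x4 = x5 hold. -/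
/-!
Once `x1` and `x5` are eliminated through `x1 = x4 x3 x4⁻¹` and `x4 = x5`, each remaining relation
says that a generator is fixed by conjugation, i.e. commutes with the conjugating word. For `x2`
this is the commutation of `x4 x3` with `x2`; for `x5` it is the commutation of `x4` with
`x4 x3 x2 x4 x3`, which after cancelling `x4` is the braid-like relation
`x3 x2 x4 x3 x4 = x4 x3 x2 x4 x3`; and for `x3` it is the commutation of `x3` with `x4 x3 x2 x4`,
which is the same relation once `x4 x3 x2 = x2 x4 x3` is used.
-/

theorem eq_mul_mul_inv_iff_commute {G : Type*} [Group G] (a b : G) :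
    a = b * a * b⁻¹ ↔ Commute b a := by
  rw [eq_mul_inv_iff_mul_eq, eq_comm]
  rfl

theorem stmt_2 {G : Type*} [Group G] (x1 x2 x3 x4 x5 : G) :
    (x1 = x4 * x3 * x4⁻¹ ∧
     x2 = x4 * x3 * x2 * x3⁻¹ * x4⁻¹ ∧
     x3 = x4 * x3 * x2 * x1 * x2⁻¹ * x3⁻¹ * x4⁻¹ ∧
     x4 = x5 ∧
     x5 = x5 * x4 * x3 * x2 * x1 * x4 * x1⁻¹ * x2⁻¹ * x3⁻¹ * x4⁻¹ * x5⁻¹) ↔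
    (x4 * x3 * x2 = x2 * x4 * x3 ∧
     x3 * x2 * x4 * x3 * x4 = x4 * x3 * x2 * x4 * x3 ∧
     x1 = x4 * x3 * x4⁻¹ ∧
     x4 = x5) := by
  have rel2 : x2 = x4 * x3 * x2 * x3⁻¹ * x4⁻¹ ↔ x4 * x3 * x2 = x2 * x4 * x3 := by
    rw [show x4 * x3 * x2 * x3⁻¹ * x4⁻¹ = (x4 * x3) * x2 * (x4 * x3)⁻¹ by group,
      eq_mul_mul_inv_iff_commute, Commute, SemiconjBy, mul_assoc x2]
  have rel3 (h1 : x1 = x4 * x3 * x4⁻¹) (hcomm : x4 * x3 * x2 = x2 * x4 * x3) :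
      x3 = x4 * x3 * x2 * x1 * x2⁻¹ * x3⁻¹ * x4⁻¹ ↔
        x3 * x2 * x4 * x3 * x4 = x4 * x3 * x2 * x4 * x3 := by
    have hw : x3 * (x4 * x3 * x2 * x4) = x3 * x2 * x4 * x3 * x4 := by
      rw [hcomm]; group
    rw [h1, show x4 * x3 * x2 * (x4 * x3 * x4⁻¹) * x2⁻¹ * x3⁻¹ * x4⁻¹ =
        (x4 * x3 * x2 * x4) * x3 * (x4 * x3 * x2 * x4)⁻¹ by group,
      eq_mul_mul_inv_iff_commute, Commute, SemiconjBy, hw, eq_comm]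
  have rel5 (h1 : x1 = x4 * x3 * x4⁻¹) (h4 : x4 = x5) :
      x5 = x5 * x4 * x3 * x2 * x1 * x4 * x1⁻¹ * x2⁻¹ * x3⁻¹ * x4⁻¹ * x5⁻¹ ↔
        x3 * x2 * x4 * x3 * x4 = x4 * x3 * x2 * x4 * x3 := by
    subst h1 h4
    calc _ ↔ Commute (x4 * (x4 * x3 * x2 * x4 * x3) * x4⁻¹) x4 := by
          rw [← eq_mul_mul_inv_iff_commute]
          group
      _ ↔ Commute (x4 * x3 * x2 * x4 * x3) x4 := by
          simpa only [mul_inv_cancel_right] using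
            Commute.conj_iff x4 (a := x4 * x3 * x2 * x4 * x3) (b := x4)
      _ ↔ x4 * (x3 * x2 * x4 * x3 * x4) = x4 * (x4 * x3 * x2 * x4 * x3) := by
          rw [Commute, SemiconjBy]; simp only [mul_assoc]
      _ ↔ _ := mul_left_cancel_iff
  constructor
  · rintro ⟨h1, h2, -, h4, h5⟩
    exact ⟨rel2.1 h2, (rel5 h1 h4).1 h5, h1, h4⟩
  · rintro ⟨hcomm, hbraid, h1, h4⟩
    exact ⟨h1, rel2.2 hcomm, (rel3 h1 hcomm).2 hbraid, h4, (rel5 h1 h4).2 hbraid⟩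
end

section
/- Let G be a group and x1, x2, x3, x4, x5 ∈ G. If x1 = x4 x3 x4⁻¹, x2 = x4 x3 x2 x3⁻¹ x4⁻¹, x3 = x4 x3 x2 x1 x2⁻¹ x3⁻¹ x4⁻¹, and x4 = x5, then x5 = x5 x4 x3 x2 x1 x4 x1⁻¹ x2⁻¹ x3⁻¹ x4⁻¹ x5⁻¹ (i.e., the fifth van Kampen relation is redundant). -/
theorem stmt_3 {G : Type*} [Group G] (x1 x2 x3 x4 x5 : G)
    (h1 : x1 = x4 * x3 * x4⁻¹)
    (h2 : x2 = x4 * x3 * x2 * x3⁻¹ * x4⁻¹)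
    (h3 : x3 = x4 * x3 * x2 * x1 * x2⁻¹ * x3⁻¹ * x4⁻¹)
    (h4 : x4 = x5) :
    x5 = x5 * x4 * x3 * x2 * x1 * x4 * x1⁻¹ * x2⁻¹ * x3⁻¹ * x4⁻¹ * x5⁻¹ := by
  subst h4
  have k1 : x1 * x4 = x4 * x3 := by rw [h1]; group
  have k2 : x2 * x4 * x3 = x4 * x3 * x2 := by nth_rewrite 1 [h2]; group
  have k3 : x3 * x4 = x4 * x3 * x2 * x1 * x2⁻¹ * x3⁻¹ := by nth_rewrite 1 [h3]; group
  have key : x3 * x2 * x1 * x4 = x4 * x3 * x2 * x1 := by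
    calc x3 * x2 * x1 * x4 = x3 * (x2 * x4 * x3) := by
          rw [mul_assoc (x3 * x2), k1]; group
      _ = x3 * x4 * (x3 * x2) := by rw [k2]; group
      _ = x4 * x3 * x2 * x1 * x2⁻¹ * x3⁻¹ * (x3 * x2) := by rw [k3]
      _ = x4 * x3 * x2 * x1 := by group
  have e : x4 * x4 * x3 * x2 * x1 * x4 * x1⁻¹ * x2⁻¹ * x3⁻¹ * x4⁻¹ * x4⁻¹
      = x4 * x4 * (x3 * x2 * x1 * x4) * x1⁻¹ * x2⁻¹ * x3⁻¹ * x4⁻¹ * x4⁻¹ := by group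
  rw [e, key]; group
end

section
/- Let G be a group and x1, x2, x3, x4 ∈ G. If x1 = x4 x3 x4⁻¹, x4 x3 x2 = x2 x4 x3, and x3 = x4 x3 x2 x1 x2⁻¹ x3⁻¹ x4⁻¹, then x4 x3 x2 x4 x3 = x3 x4 x3 x2 x4 and x4 x3 x2 x4 x3 = x3 x2 x4 x3 x4. -/
theorem stmt_4 {G : Type*} [Group G] (x1 x2 x3 x4 : G)
    (h1 : x1 = x4 * x3 * x4⁻¹)
    (h2 : x4 * x3 * x2 = x2 * x4 * x3)
    (h3 : x3 = x4 * x3 * x2 * x1 * x2⁻¹ * x3⁻¹ * x4⁻¹) :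
    x4 * x3 * x2 * x4 * x3 = x3 * x4 * x3 * x2 * x4 ∧
    x4 * x3 * x2 * x4 * x3 = x3 * x2 * x4 * x3 * x4 := by
  rw [h1] at h3
  have key : x3 * x4 * x3 * x2 * x4 = x4 * x3 * x2 * x4 * x3 := by
    calc x3 * x4 * x3 * x2 * x4
        = (x4 * x3 * x2 * (x4 * x3 * x4⁻¹) * x2⁻¹ * x3⁻¹ * x4⁻¹) * x4 * x3 * x2 * x4 := by
          rw [← h3]
      _ = x4 * x3 * x2 * x4 * x3 := by group
  refine ⟨key.symm, ?_⟩
  rw [← key, show x3 * x4 * x3 * x2 * x4 = x3 * (x4 * x3 * x2) * x4 by group, h2]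
  group
end

section
/- Let G be a group and x1, x2, x3 ∈ G. If x1 = x3 x2 x1 x3 x2 x1 x2⁻¹ x3⁻¹ x1⁻¹ x2⁻¹ x3⁻¹ and x2 = x3 x2 x1 x3 x2 x1 x2 x1⁻¹ x2⁻¹ x3⁻¹ x1⁻¹ x2⁻¹ x3⁻¹, then x3 = x3 x2 x1 x3 x2 x1 x3 x1⁻¹ x2⁻¹ x3⁻¹ x1⁻¹ x2⁻¹ x3⁻¹ (i.e., the third van Kampen relation is redundant). -/
theorem stmt_6 {G : Type*} [Group G] (x1 x2 x3 : G)
    (h1 : x1 = x3 * x2 * x1 * x3 * x2 * x1 * x2⁻¹ * x3⁻¹ * x1⁻¹ * x2⁻¹ * x3⁻¹)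
    (h2 : x2 = x3 * x2 * x1 * x3 * x2 * x1 * x2 * x1⁻¹ * x2⁻¹ * x3⁻¹ * x1⁻¹ * x2⁻¹ * x3⁻¹) :
    x3 = x3 * x2 * x1 * x3 * x2 * x1 * x3 * x1⁻¹ * x2⁻¹ * x3⁻¹ * x1⁻¹ * x2⁻¹ * x3⁻¹ := by
  have c1 : x1 * (x3 * x2 * x1 * x3 * x2 * x1) = (x3 * x2 * x1 * x3 * x2 * x1) * x1 := by
    nth_rewrite 1 [h1]
    group
  have c2 : x2 * (x3 * x2 * x1 * x3 * x2 * x1) = (x3 * x2 * x1 * x3 * x2 * x1) * x2 := by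
    nth_rewrite 1 [h2]
    group
  have c12 : (x2 * x1) * (x3 * x2 * x1 * x3 * x2 * x1)
      = (x3 * x2 * x1 * x3 * x2 * x1) * (x2 * x1) := by
    rw [mul_assoc, c1, ← mul_assoc, c2, mul_assoc]
  have key2 : x2 * x1 * x3 * x2 * x1 * x3 = x3 * x2 * x1 * x3 * x2 * x1 := by
    apply mul_right_cancel (b := x2 * x1)
    calc (x2 * x1 * x3 * x2 * x1 * x3) * (x2 * x1)
        = (x2 * x1) * (x3 * x2 * x1 * x3 * x2 * x1) := by group
      _ = (x3 * x2 * x1 * x3 * x2 * x1) * (x2 * x1) := c12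
  have c3 : x3 * (x3 * x2 * x1 * x3 * x2 * x1) = (x3 * x2 * x1 * x3 * x2 * x1) * x3 := by
    calc x3 * (x3 * x2 * x1 * x3 * x2 * x1)
        = x3 * (x2 * x1 * x3 * x2 * x1 * x3) := by rw [key2]
      _ = (x3 * x2 * x1 * x3 * x2 * x1) * x3 := by group
  calc x3 = (x3 * (x3 * x2 * x1 * x3 * x2 * x1)) * (x3 * x2 * x1 * x3 * x2 * x1)⁻¹ := by group
    _ = ((x3 * x2 * x1 * x3 * x2 * x1) * x3) * (x3 * x2 * x1 * x3 * x2 * x1)⁻¹ := by rw [c3]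
    _ = x3 * x2 * x1 * x3 * x2 * x1 * x3 * x1⁻¹ * x2⁻¹ * x3⁻¹ * x1⁻¹ * x2⁻¹ * x3⁻¹ := by group
end

section
/- Let G be a group, n ≥ 1, and x1, …, xn ∈ G. Let π = xn x(n−1) ⋯ x1, and for each k with 1 ≤ k ≤ n let πk = xk x(k−1) ⋯ x1 xn x(n−1) ⋯ x(k+1) be the cyclic rotation of π starting with xk (so πn = π). Then π² commutes with every xi (i = 1, …, n) if and only if π1² = π2² = ⋯ = πn², i.e., the squares of all cyclic rotations of the product xn x(n−1) ⋯ x1 coincide. -/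
/-- For `1 ≤ k ≤ n`, `cyclicProd x n k` is the cyclic rotation
`x k * x (k-1) * ⋯ * x 1 * x n * x (n-1) * ⋯ * x (k+1)` of the product
`x n * x (n-1) * ⋯ * x 1`.  In particular, `cyclicProd x n n` is the product
`π = x n * x (n-1) * ⋯ * x 1` itself. -/
def cyclicProd {G : Type*} [Group G] (x : ℕ → G) (n k : ℕ) : G :=
  ((List.range k).map (fun i => x (k - i))).prod *
    ((List.range (n - k)).map (fun i => x (n - i))).prod

namespace Stmt8Aux

variable {G : Type*} [Group G]

/-- Prefix product `x k * x (k-1) * ⋯ * x 1`. -/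
def pre (x : ℕ → G) (k : ℕ) : G :=
  ((List.range k).map (fun i => x (k - i))).prod

lemma pre_succ (x : ℕ → G) (k : ℕ) : pre x (k + 1) = x (k + 1) * pre x k := by
  simp [pre, List.range_succ_eq_map, List.map_map, Function.comp_def]

lemma aux (x : ℕ → G) :
    ∀ d k, ((List.range d).map (fun i => x (k + d - i))).prod * pre x k = pre x (k + d) := by
  intro d
  induction d with
  | zero => intro k; simp [pre]
  | succ d ih =>
    intro k
    have h1 : ((List.range (d + 1)).map (fun i => x (k + (d + 1) - i))).prod
        = ((List.range d).map (fun i => x ((k + 1) + d - i))).prod * x (k + 1) := by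
      rw [List.range_succ, List.map_append, List.prod_append]
      congr 1
      · congr 1
        apply List.map_congr_left
        intro i hi
        simp only [List.mem_range] at hi
        congr 1
        omega
      · simp
        congr 1
        omega
    rw [h1, mul_assoc, ← pre_succ, ih (k + 1)]
    congr 1
    omega

lemma cyclicProd_eq (x : ℕ → G) (n k : ℕ) (h : k ≤ n) :
    cyclicProd x n k = pre x k * pre x n * (pre x k)⁻¹ := by
  have h2 := aux x (n - k) k
  have hk : k + (n - k) = n := Nat.add_sub_cancel' h
  rw [hk] at h2
  have h3 : ((List.range (n - k)).map (fun i => x (n - i))).prod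
      = pre x n * (pre x k)⁻¹ := by
    rw [← h2]; group
  show pre x k * _ = _
  rw [h3, mul_assoc]

lemma cyclicProd_top (x : ℕ → G) (n : ℕ) : cyclicProd x n n = pre x n := by
  show pre x n * _ = _
  simp [Nat.sub_self]

end Stmt8Aux

open Stmt8Aux in
theorem stmt_8 {G : Type*} [Group G] (n : ℕ) (hn : 1 ≤ n) (x : ℕ → G) :
    (∀ i, 1 ≤ i → i ≤ n → Commute ((cyclicProd x n n) ^ 2) (x i)) ↔
    (∀ k, 1 ≤ k → k ≤ n → (cyclicProd x n k) ^ 2 = (cyclicProd x n n) ^ 2) := by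
  rw [cyclicProd_top]
  set π := pre x n with hπ
  have key : ∀ k ≤ n, cyclicProd x n k ^ 2 = pre x k * π ^ 2 * (pre x k)⁻¹ := by
    intro k hk
    rw [cyclicProd_eq x n k hk, hπ, sq, sq]
    group
  constructor
  · intro h k hk1 hkn
    have hc : ∀ m ≤ n, Commute (π ^ 2) (pre x m) := by
      intro m
      induction m with
      | zero => intro _; simp [pre]
      | succ m ih =>
        intro hm
        rw [pre_succ]
        exact (h (m + 1) (Nat.succ_le_succ (Nat.zero_le m)) hm).mul_right
          (ih (Nat.le_of_succ_le hm))
    rw [key k hkn]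
    have := (hc k hkn).eq
    rw [← this]
    group
  · intro h i hi1 hin
    have hc : ∀ m ≤ n, Commute (π ^ 2) (pre x m) := by
      intro m hm
      rcases Nat.eq_zero_or_pos m with hm0 | hm1
      · subst hm0; simp [pre]
      · have := h m hm1 hm
        rw [key m hm] at this
        have h4 : pre x m * π ^ 2 = π ^ 2 * pre x m :=
          mul_inv_eq_iff_eq_mul.mp this
        exact h4.symm
    obtain ⟨j, rfl⟩ : ∃ j, i = j + 1 := ⟨i - 1, by omega⟩
    have hx : x (j + 1) = pre x (j + 1) * (pre x j)⁻¹ := by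
      rw [pre_succ]; group
    rw [hx]
    exact (hc (j + 1) hin).mul_right (hc j (by omega)).inv_right
end

section
/- Let G be a group and x1, x2, x3, x4 ∈ G. If x1 = x4 x3 x2 x1 x2⁻¹ x3⁻¹ x4⁻¹, x2 = x4 x3 x2 x1 x4 x3 x2 x3⁻¹ x4⁻¹ x1⁻¹ x2⁻¹ x3⁻¹ x4⁻¹, and x3 = x4 x3 x2 x1 x4 x3 x2 x3 x2⁻¹ x3⁻¹ x4⁻¹ x1⁻¹ x2⁻¹ x3⁻¹ x4⁻¹, then x4 = x4 x3 x2 x1 x4 x3 x2 x4 x2⁻¹ x3⁻¹ x4⁻¹ x1⁻¹ x2⁻¹ x3⁻¹ x4⁻¹ (i.e., the fourth van Kampen relation is redundant). -/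
theorem stmt_10 {G : Type*} [Group G] (x1 x2 x3 x4 : G)
    (h1 : x1 = x4 * x3 * x2 * x1 * x2⁻¹ * x3⁻¹ * x4⁻¹)
    (h2 : x2 = x4 * x3 * x2 * x1 * x4 * x3 * x2 * x3⁻¹ * x4⁻¹ * x1⁻¹ * x2⁻¹ * x3⁻¹ * x4⁻¹)
    (h3 : x3 = x4 * x3 * x2 * x1 * x4 * x3 * x2 * x3 * x2⁻¹ * x3⁻¹ * x4⁻¹ * x1⁻¹ * x2⁻¹ * x3⁻¹ * x4⁻¹) :
    x4 = x4 * x3 * x2 * x1 * x4 * x3 * x2 * x4 * x2⁻¹ * x3⁻¹ * x4⁻¹ * x1⁻¹ * x2⁻¹ * x3⁻¹ * x4⁻¹ := by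
  have H1 : x1 * (x4*x3*x2) = x4*x3*x2 * x1 := by nth_rewrite 1 [h1]; group
  have H2 : x2 * (x4*x3*x2*x1*x4*x3) = x4*x3*x2*x1*x4*x3 * x2 := by nth_rewrite 1 [h2]; group
  have k3 : Commute x3 (x4*x3*x2*x1*x4*x3*x2) := by
    show x3 * _ = _ * x3
    nth_rewrite 1 [h3]; group
  have k2 : Commute x2 (x4*x3*x2*x1*x4*x3*x2) := by
    show x2 * _ = _ * x2
    calc x2 * (x4*x3*x2*x1*x4*x3*x2)
        = (x2 * (x4*x3*x2*x1*x4*x3)) * x2 := by group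
      _ = (x4*x3*x2*x1*x4*x3 * x2) * x2 := by rw [H2]
      _ = (x4*x3*x2*x1*x4*x3*x2) * x2 := by group
  have k1 : Commute x1 (x4*x3*x2*x1*x4*x3*x2) := by
    show x1 * _ = _ * x1
    calc x1 * (x4*x3*x2*x1*x4*x3*x2)
        = (x1*(x4*x3*x2)) * (x1*(x4*x3*x2)) := by group
      _ = ((x4*x3*x2)*x1) * ((x4*x3*x2)*x1) := by rw [H1]
      _ = (x4*x3*x2*x1*x4*x3*x2) * x1 := by group
  have kb : Commute (x4*x3*x2) (x4*x3*x2*x1*x4*x3*x2) := by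
    show _ * _ = _ * _
    calc (x4*x3*x2) * (x4*x3*x2*x1*x4*x3*x2)
        = (x4*x3*x2) * ((x4*x3*x2)*x1) * (x4*x3*x2) := by group
      _ = (x4*x3*x2) * (x1*(x4*x3*x2)) * (x4*x3*x2) := by rw [← H1]
      _ = (x4*x3*x2*x1*x4*x3*x2) * (x4*x3*x2) := by group
  have ka : Commute (x4*x3*x2*x1) (x4*x3*x2*x1*x4*x3*x2) := kb.mul_left k1
  have kax4 : Commute (x4*x3*x2*x1*x4) (x4*x3*x2*x1*x4*x3*x2) := by
    have k : Commute ((x4*x3*x2*x1*x4*x3*x2) * x2⁻¹ * x3⁻¹) (x4*x3*x2*x1*x4*x3*x2) :=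
      ((Commute.refl _).mul_left k2.inv_left).mul_left k3.inv_left
    have e : (x4*x3*x2*x1*x4*x3*x2) * x2⁻¹ * x3⁻¹ = x4*x3*x2*x1*x4 := by group
    rwa [e] at k
  have k4 : Commute x4 (x4*x3*x2*x1*x4*x3*x2) := by
    have k : Commute ((x4*x3*x2*x1)⁻¹ * (x4*x3*x2*x1*x4)) (x4*x3*x2*x1*x4*x3*x2) :=
      ka.inv_left.mul_left kax4
    have e : (x4*x3*x2*x1)⁻¹ * (x4*x3*x2*x1*x4) = x4 := by group
    rwa [e] at k
  calc x4 = (x4 * (x4*x3*x2*x1*x4*x3*x2)) * (x4*x3*x2*x1*x4*x3*x2)⁻¹ := by group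
    _ = ((x4*x3*x2*x1*x4*x3*x2) * x4) * (x4*x3*x2*x1*x4*x3*x2)⁻¹ := by rw [k4.eq]
    _ = x4 * x3 * x2 * x1 * x4 * x3 * x2 * x4 * x2⁻¹ * x3⁻¹ * x4⁻¹ * x1⁻¹ * x2⁻¹ * x3⁻¹ * x4⁻¹ := by
        group
end

section
/- Let G be a group and x1, x2, x3, x4, x5, x6 ∈ G. Then the six relations x1 = x5 x4 x3 x4⁻¹ x5⁻¹, x2 = x5 x4 x3 x2 x3⁻¹ x4⁻¹ x5⁻¹, x3 = x5 x4 x3 x2 x1 x2⁻¹ x3⁻¹ x4⁻¹ x5⁻¹, x4 = x5 x4 x3 x2 x1 x5 x4 x5⁻¹ x1⁻¹ x2⁻¹ x3⁻¹ x4⁻¹ x5⁻¹, x5 = x6, and x6 = x6 x5 x4 x3 x2 x1 x5 x4 x5 x4⁻¹ x5⁻¹ x1⁻¹ x2⁻¹ x3⁻¹ x4⁻¹ x5⁻¹ x6⁻¹ hold simultaneously if and only if the relations x5 x4 x3 x2 = x2 x5 x4 x3, x3 x5 x4 x3 x2 x5 x4 = x5 x4 x3 x2 x5 x4 x3 = x4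 x3 x5 x4 x3 x2 x5, x1 = x5 x4 x3 x4⁻¹ x5⁻¹, and x5 = x6 hold. -/
theorem stmt_12 {G : Type*} [Group G] (x1 x2 x3 x4 x5 x6 : G) :
    (x1 = x5 * x4 * x3 * x4⁻¹ * x5⁻¹ ∧
     x2 = x5 * x4 * x3 * x2 * x3⁻¹ * x4⁻¹ * x5⁻¹ ∧
     x3 = x5 * x4 * x3 * x2 * x1 * x2⁻¹ * x3⁻¹ * x4⁻¹ * x5⁻¹ ∧
     x4 = x5 * x4 * x3 * x2 * x1 * x5 * x4 * x5⁻¹ * x1⁻¹ * x2⁻¹ * x3⁻¹ * x4⁻¹ * x5⁻¹ ∧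
     x5 = x6 ∧
     x6 = x6 * x5 * x4 * x3 * x2 * x1 * x5 * x4 * x5 * x4⁻¹ * x5⁻¹ * x1⁻¹ * x2⁻¹ * x3⁻¹ * x4⁻¹ * x5⁻¹ * x6⁻¹) ↔
    (x5 * x4 * x3 * x2 = x2 * x5 * x4 * x3 ∧
     x3 * x5 * x4 * x3 * x2 * x5 * x4 = x5 * x4 * x3 * x2 * x5 * x4 * x3 ∧
     x5 * x4 * x3 * x2 * x5 * x4 * x3 = x4 * x3 * x5 * x4 * x3 * x2 * x5 ∧
     x1 = x5 * x4 * x3 * x4⁻¹ * x5⁻¹ ∧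
     x5 = x6) := by
  constructor
  · rintro ⟨h1, h2, h3, h4, h5, h6⟩
    rw [h1] at h3 h4
    have k1 : x5 * x4 * x3 * x2 = x2 * x5 * x4 * x3 := by
      nth_rewrite 2 [h2]; group
    have k2 : x3 * x5 * x4 * x3 * x2 * x5 * x4 = x5 * x4 * x3 * x2 * x5 * x4 * x3 := by
      nth_rewrite 1 [h3]; group
    have F4 : x4 * (x5 * x4 * x3 * x2 * x5 * x4 * x3)
        = x5 * x4 * x3 * x2 * x5 * x4 * x3 * x4 := by
      nth_rewrite 1 [h4]; group
    have k3 : x5 * x4 * x3 * x2 * x5 * x4 * x3 = x4 * x3 * x5 * x4 * x3 * x2 * x5 := by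
      calc x5 * x4 * x3 * x2 * x5 * x4 * x3
          = x5 * x4 * x3 * x2 * x5 * x4 * x3 * x4 * x4⁻¹ := by group
        _ = x4 * (x5 * x4 * x3 * x2 * x5 * x4 * x3) * x4⁻¹ := by rw [← F4]
        _ = x4 * (x3 * x5 * x4 * x3 * x2 * x5 * x4) * x4⁻¹ := by rw [k2]
        _ = x4 * x3 * x5 * x4 * x3 * x2 * x5 := by group
    exact ⟨k1, k2, k3, h1, h5⟩
  · rintro ⟨c1, c2, c3, c4, c5⟩
    have F4 : x4 * (x5 * x4 * x3 * x2 * x5 * x4 * x3)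
        = x5 * x4 * x3 * x2 * x5 * x4 * x3 * x4 := by
      calc x4 * (x5 * x4 * x3 * x2 * x5 * x4 * x3)
          = x4 * (x3 * x5 * x4 * x3 * x2 * x5 * x4) := by rw [← c2]
        _ = x4 * x3 * x5 * x4 * x3 * x2 * x5 * x4 := by group
        _ = x5 * x4 * x3 * x2 * x5 * x4 * x3 * x4 := by rw [← c3]
    have F5 : x5 * (x5 * x4 * x3 * x2 * x5 * x4 * x3)
        = x5 * x4 * x3 * x2 * x5 * x4 * x3 * x5 := by
      calc x5 * (x5 * x4 * x3 * x2 * x5 * x4 * x3)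
          = x5 * (x4 * x3 * x5 * x4 * x3 * x2 * x5) := by rw [c3]
        _ = x5 * x4 * x3 * (x5 * x4 * x3 * x2) * x5 := by group
        _ = x5 * x4 * x3 * (x2 * x5 * x4 * x3) * x5 := by rw [c1]
        _ = x5 * x4 * x3 * x2 * x5 * x4 * x3 * x5 := by group
    refine ⟨c4, ?_, ?_, ?_, c5, ?_⟩
    · rw [c1]; group
    · rw [c4]
      calc x3 = x3 * x5 * x4 * x3 * x2 * x5 * x4 * (x5 * x4 * x3 * x2 * x5 * x4)⁻¹ := by
            group
        _ = x5 * x4 * x3 * x2 * x5 * x4 * x3 * (x5 * x4 * x3 * x2 * x5 * x4)⁻¹ := by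
            rw [c2]
        _ = x5 * x4 * x3 * x2 * (x5 * x4 * x3 * x4⁻¹ * x5⁻¹) * x2⁻¹ * x3⁻¹ * x4⁻¹ * x5⁻¹ := by
            group
    · rw [c4]
      calc x4
          = x4 * (x5 * x4 * x3 * x2 * x5 * x4 * x3) * (x5 * x4 * x3 * x2 * x5 * x4 * x3)⁻¹ := by
            group
        _ = x5 * x4 * x3 * x2 * x5 * x4 * x3 * x4 * (x5 * x4 * x3 * x2 * x5 * x4 * x3)⁻¹ := by
            rw [F4]
        _ = x5 * x4 * x3 * x2 * (x5 * x4 * x3 * x4⁻¹ * x5⁻¹) * x5 * x4 * x5⁻¹ *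
              (x5 * x4 * x3 * x4⁻¹ * x5⁻¹)⁻¹ * x2⁻¹ * x3⁻¹ * x4⁻¹ * x5⁻¹ := by
            group
    · rw [← c5, c4]
      calc x5
          = x5 * (x5 * (x5 * x4 * x3 * x2 * x5 * x4 * x3)) *
              (x5 * x4 * x3 * x2 * x5 * x4 * x3)⁻¹ * x5⁻¹ := by
            group
        _ = x5 * (x5 * x4 * x3 * x2 * x5 * x4 * x3 * x5) *
              (x5 * x4 * x3 * x2 * x5 * x4 * x3)⁻¹ * x5⁻¹ := by
            rw [F5]
        _ = x5 * x5 * x4 * x3 * x2 * (x5 * x4 * x3 * x4⁻¹ * x5⁻¹) * x5 * x4 * x5 * x4⁻¹ * x5⁻¹ *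
              (x5 * x4 * x3 * x4⁻¹ * x5⁻¹)⁻¹ * x2⁻¹ * x3⁻¹ * x4⁻¹ * x5⁻¹ * x5⁻¹ := by
            group
end

section
/- Let G be a group and x1, x2, x3, x4, x5, x6 ∈ G. If x1 = x5 x4 x3 x4⁻¹ x5⁻¹, x2 = x5 x4 x3 x2 x3⁻¹ x4⁻¹ x5⁻¹, x3 = x5 x4 x3 x2 x1 x2⁻¹ x3⁻¹ x4⁻¹ x5⁻¹, x4 = x5 x4 x3 x2 x1 x5 x4 x5⁻¹ x1⁻¹ x2⁻¹ x3⁻¹ x4⁻¹ x5⁻¹, and x5 = x6, then x6 = x6 x5 x4 x3 x2 x1 x5 x4 x5 x4⁻¹ x5⁻¹ x1⁻¹ x2⁻¹ x3⁻¹ x4⁻¹ x5⁻¹ x6⁻¹ (i.e., the sixth van Kampen relation is redundant). -/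
theorem stmt_13 {G : Type*} [Group G] (x1 x2 x3 x4 x5 x6 : G)
    (h1 : x1 = x5 * x4 * x3 * x4⁻¹ * x5⁻¹)
    (h2 : x2 = x5 * x4 * x3 * x2 * x3⁻¹ * x4⁻¹ * x5⁻¹)
    (h3 : x3 = x5 * x4 * x3 * x2 * x1 * x2⁻¹ * x3⁻¹ * x4⁻¹ * x5⁻¹)
    (h4 : x4 = x5 * x4 * x3 * x2 * x1 * x5 * x4 * x5⁻¹ * x1⁻¹ * x2⁻¹ * x3⁻¹ * x4⁻¹ * x5⁻¹)
    (h5 : x5 = x6) :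
    x6 = x6 * x5 * x4 * x3 * x2 * x1 * x5 * x4 * x5 * x4⁻¹ * x5⁻¹ * x1⁻¹ * x2⁻¹ * x3⁻¹ * x4⁻¹ * x5⁻¹ * x6⁻¹ := by
  -- tail-form rewriting lemmas
  have T1 : ∀ z : G, x5*(x4*(x3*z)) = x1*(x5*(x4*z)) := by
    intro z; rw [h1]; group
  have T2 : ∀ z : G, x2*(x5*(x4*(x3*z))) = x5*(x4*(x3*(x2*z))) := by
    intro z; nth_rewrite 1 [h2]; group
  have T3 : ∀ z : G, x3*(x5*(x4*(x3*(x2*z)))) = x5*(x4*(x3*(x2*(x1*z)))) := by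
    intro z; nth_rewrite 1 [h3]; group
  have T4 : ∀ z : G, x5*(x4*(x3*(x2*(x1*(x5*(x4*z)))))) = x4*(x5*(x4*(x3*(x2*(x1*(x5*z)))))) := by
    intro z; nth_rewrite 3 [h4]; group
  have T5 : ∀ z : G, x2*(x5*(x4*(x3*(x1*z)))) = x3*(x5*(x4*(x3*(x2*z)))) := by
    intro z; rw [T2 (x1*z), ← T3 z]
  -- u = x2 * q * q commutes with x5*x4
  have T6 : ∀ z : G, x5*(x4*(x2*(x5*(x4*(x3*(x5*(x4*(x3*z)))))))) = x2*(x5*(x4*(x3*(x5*(x4*(x3*(x5*(x4*z)))))))) := by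
    intro z
    calc x5*(x4*(x2*(x5*(x4*(x3*(x5*(x4*(x3*z))))))))
        = x5*(x4*(x2*(x5*(x4*(x3*(x1*(x5*(x4*z)))))))) := by rw [T1 z]
      _ = x5*(x4*(x3*(x5*(x4*(x3*(x2*(x5*(x4*z)))))))) := by rw [T5 (x5*(x4*z))]
      _ = x5*(x4*(x3*(x2*(x5*(x4*(x3*(x5*(x4*z)))))))) := by rw [← T2 (x5*(x4*z))]
      _ = x2*(x5*(x4*(x3*(x5*(x4*(x3*(x5*(x4*z)))))))) := by rw [← T2 (x5*(x4*(x3*(x5*(x4*z)))))]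
  -- c * x5 * x4 = u  (tail form)
  have T8 : ∀ z : G, x5*(x4*(x3*(x2*(x1*(x5*(x4*z)))))) = x2*(x5*(x4*(x3*(x5*(x4*(x3*z)))))) := by
    intro z; rw [← T1 z, ← T2 (x5*(x4*(x3*z)))]
  -- x4 * c * x5 = u (tail form)
  have T9 : ∀ z : G, x4*(x5*(x4*(x3*(x2*(x1*(x5*z)))))) = x2*(x5*(x4*(x3*(x5*(x4*(x3*z)))))) := by
    intro z; rw [← T4 z, T8 z]
  -- x4 commutes with u
  have T10 : ∀ z : G, x4*(x2*(x5*(x4*(x3*(x5*(x4*(x3*z))))))) = x2*(x5*(x4*(x3*(x5*(x4*(x3*(x4*z))))))) := by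
    intro z; rw [← T9 z, ← T9 (x4*z), T4 z]
  -- x5 commutes with u
  have T11 : ∀ z : G, x5*(x2*(x5*(x4*(x3*(x5*(x4*(x3*z))))))) = x2*(x5*(x4*(x3*(x5*(x4*(x3*(x5*z))))))) := by
    intro z
    have h := T6 (x4⁻¹*z)
    rw [T10 (x4⁻¹*z)] at h
    simpa [mul_inv_cancel_left] using h
  -- key relation: c * x5 * x4 * x5 = x5 * c * x5 * x4
  have key : ∀ z : G, x5*(x4*(x3*(x2*(x1*(x5*(x4*(x5*z))))))) = x5*(x5*(x4*(x3*(x2*(x1*(x5*(x4*z))))))) := by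
    intro z; rw [T8 (x5*z), ← T11 z, T8 z]
  rw [← h5]
  simp only [mul_assoc]
  rw [key (x4⁻¹*(x5⁻¹*(x1⁻¹*(x2⁻¹*(x3⁻¹*(x4⁻¹*(x5⁻¹*x5⁻¹)))))))]
  group
end

section
/- Let G be a group and x1, x2, x3, x4, x5 ∈ G. If x1 = x5 x4 x3 x4⁻¹ x5⁻¹ and x3 = x5 x4 x3 x2 x1 x2⁻¹ x3⁻¹ x4⁻¹ x5⁻¹, then x3 x5 x4 x3 x2 x5 x4 = x5 x4 x3 x2 x5 x4 x3. -/
theorem stmt_14 {G : Type*} [Group G] (x1 x2 x3 x4 x5 : G)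
    (h1 : x1 = x5 * x4 * x3 * x4⁻¹ * x5⁻¹)
    (h3 : x3 = x5 * x4 * x3 * x2 * x1 * x2⁻¹ * x3⁻¹ * x4⁻¹ * x5⁻¹) :
    x3 * x5 * x4 * x3 * x2 * x5 * x4 = x5 * x4 * x3 * x2 * x5 * x4 * x3 := by
  have e1 : x1 * (x5 * x4) = (x5 * x4) * x3 := by rw [h1]; group
  have e2 : x3 * (x5 * x4) = (x5 * x4) * (x3 * x2 * x1 * x2⁻¹ * x3⁻¹) := by
    conv_lhs => rw [h3]
    group
  calc x3 * x5 * x4 * x3 * x2 * x5 * x4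
      = (x3 * (x5 * x4)) * (x3 * x2) * (x5 * x4) := by group
    _ = ((x5 * x4) * (x3 * x2 * x1 * x2⁻¹ * x3⁻¹)) * (x3 * x2) * (x5 * x4) := by rw [e2]
    _ = (x5 * x4) * (x3 * x2) * (x1 * (x5 * x4)) := by group
    _ = (x5 * x4) * (x3 * x2) * ((x5 * x4) * x3) := by rw [e1]
    _ = x5 * x4 * x3 * x2 * x5 * x4 * x3 := by group
end

section
/- Let G be a group and x1, x2, x3, x4 ∈ G. Then the four relations x1 = x4 x3 x2 x1 x2⁻¹ x3⁻¹ x4⁻¹, x2 = x4 x3 x2 x1 x3 x2 x3⁻¹ x1⁻¹ x2⁻¹ x3⁻¹ x4⁻¹, x3 = x4 x3 x2 x1 x3 x2 x3 x2⁻¹ x3⁻¹ x1⁻¹ x2⁻¹ x3⁻¹ x4⁻¹, and x4 = x4 x3 x2 x1 x4 x1⁻¹ x2⁻¹ x3⁻¹ x4⁻¹ hold simultaneously if and only if the relations x4 x3 x2 x1 = x1 x4 x3 x2 = x3 x2 x1 x4 and x4 x3 x2 x1 x3 x2 = x2 x4 x3 x2 x1 x3 hold. -/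
theorem stmt_15 {G : Type*} [Group G] (x1 x2 x3 x4 : G) :
    (x1 = x4 * x3 * x2 * x1 * x2⁻¹ * x3⁻¹ * x4⁻¹ ∧
     x2 = x4 * x3 * x2 * x1 * x3 * x2 * x3⁻¹ * x1⁻¹ * x2⁻¹ * x3⁻¹ * x4⁻¹ ∧
     x3 = x4 * x3 * x2 * x1 * x3 * x2 * x3 * x2⁻¹ * x3⁻¹ * x1⁻¹ * x2⁻¹ * x3⁻¹ * x4⁻¹ ∧
     x4 = x4 * x3 * x2 * x1 * x4 * x1⁻¹ * x2⁻¹ * x3⁻¹ * x4⁻¹) ↔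
    (x4 * x3 * x2 * x1 = x1 * x4 * x3 * x2 ∧
     x1 * x4 * x3 * x2 = x3 * x2 * x1 * x4 ∧
     x4 * x3 * x2 * x1 * x3 * x2 = x2 * x4 * x3 * x2 * x1 * x3) := by
  constructor
  · rintro ⟨h1, h2, h3, h4⟩
    have A : x1 * x4 * x3 * x2 = x4 * x3 * x2 * x1 := by
      nth_rewrite 1 [h1]; group
    have B : x4 * (x4 * x3 * x2 * x1) = x4 * x3 * x2 * x1 * x4 := by
      nth_rewrite 1 [h4]; group
    have B' : x4 * x3 * x2 * x1 = x3 * x2 * x1 * x4 := by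
      have h := congrArg (fun y => x4⁻¹ * y) B
      simpa [mul_assoc] using h
    have C : x2 * x4 * x3 * x2 * x1 * x3 = x4 * x3 * x2 * x1 * x3 * x2 := by
      nth_rewrite 1 [h2]; group
    exact ⟨A.symm, A.trans B', C.symm⟩
  · rintro ⟨g1, g2, g3⟩
    have hc : x4 * (x4 * x3 * x2 * x1) = x4 * x3 * x2 * x1 * x4 := by
      nth_rewrite 1 [g1.trans g2]; group
    have hd : x3 * (x2 * (x4 * x3 * x2 * x1)) = x4 * x3 * x2 * x1 * x3 * x2 := by
      calc x3 * (x2 * (x4 * x3 * x2 * x1)) = x3 * (x2 * (x1 * x4 * x3 * x2)) := by rw [g1]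
        _ = x3 * x2 * x1 * x4 * (x3 * x2) := by group
        _ = x1 * x4 * x3 * x2 * (x3 * x2) := by rw [← g2]
        _ = x4 * x3 * x2 * x1 * (x3 * x2) := by rw [← g1]
        _ = x4 * x3 * x2 * x1 * x3 * x2 := by group
    have h3' : x3 * (x4 * x3 * x2 * x1 * x3 * x2) = x4 * x3 * x2 * x1 * x3 * x2 * x3 := by
      calc x3 * (x4 * x3 * x2 * x1 * x3 * x2) = x3 * (x2 * x4 * x3 * x2 * x1 * x3) := by rw [g3]
        _ = x3 * (x2 * (x4 * x3 * x2 * x1)) * x3 := by group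
        _ = x4 * x3 * x2 * x1 * x3 * x2 * x3 := by rw [hd]
    refine ⟨?_, ?_, ?_, ?_⟩
    · rw [g1]; group
    · rw [g3]; group
    · rw [← h3']; group
    · rw [← hc]; group
end

section
/- Let G be a group and x1, x2, x3, x4 ∈ G. If x1 = x4 x3 x2 x1 x2⁻¹ x3⁻¹ x4⁻¹, x2 = x4 x3 x2 x1 x3 x2 x3⁻¹ x1⁻¹ x2⁻¹ x3⁻¹ x4⁻¹, and x4 = x4 x3 x2 x1 x4 x1⁻¹ x2⁻¹ x3⁻¹ x4⁻¹, then x3 = x4 x3 x2 x1 x3 x2 x3 x2⁻¹ x3⁻¹ x1⁻¹ x2⁻¹ x3⁻¹ x4⁻¹ (i.e., the third van Kampen relation is redundant). -/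
theorem stmt_16 {G : Type*} [Group G] (x1 x2 x3 x4 : G)
    (h1 : x1 = x4 * x3 * x2 * x1 * x2⁻¹ * x3⁻¹ * x4⁻¹)
    (h2 : x2 = x4 * x3 * x2 * x1 * x3 * x2 * x3⁻¹ * x1⁻¹ * x2⁻¹ * x3⁻¹ * x4⁻¹)
    (h4 : x4 = x4 * x3 * x2 * x1 * x4 * x1⁻¹ * x2⁻¹ * x3⁻¹ * x4⁻¹) :
    x3 = x4 * x3 * x2 * x1 * x3 * x2 * x3 * x2⁻¹ * x3⁻¹ * x1⁻¹ * x2⁻¹ * x3⁻¹ * x4⁻¹ := by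
  have hA : x1 * (x4 * x3 * x2) = (x4 * x3 * x2) * x1 := by
    nth_rewrite 1 [h1]; group
  have hB : x4 * (x4 * x3 * x2 * x1) = (x4 * x3 * x2 * x1) * x4 := by
    nth_rewrite 1 [h4]; group
  have hC : x2 * ((x4 * x3 * x2 * x1) * x3) = (x4 * x3 * x2 * x1) * x3 * x2 := by
    nth_rewrite 1 [h2]; group
  have cA : Commute x1 (x4 * x3 * x2) := hA
  have cA' : Commute x1 (x4 * x3 * x2 * x1) := cA.mul_right (Commute.refl x1)
  have cB : Commute x4 (x4 * x3 * x2 * x1) := hB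
  have hD : Commute (x4 * x3 * x2 * x1) (x3 * x2) := by
    have e : x3 * x2 = x4⁻¹ * ((x4 * x3 * x2 * x1) * x1⁻¹) := by group
    rw [e]
    exact (cB.symm.inv_right).mul_right
      ((Commute.refl _).mul_right cA'.symm.inv_right)
  have hD_eq : (x4 * x3 * x2 * x1) * (x3 * x2) = (x3 * x2) * (x4 * x3 * x2 * x1) := hD
  have hphi3 : (x4 * x3 * x2 * x1) * x3 = x2⁻¹ * x3 * x2 * (x4 * x3 * x2 * x1) := by
    calc (x4 * x3 * x2 * x1) * x3
        = x2⁻¹ * (x2 * ((x4 * x3 * x2 * x1) * x3)) := by group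
      _ = x2⁻¹ * ((x4 * x3 * x2 * x1) * (x3 * x2)) := by rw [hC]; group
      _ = x2⁻¹ * ((x3 * x2) * (x4 * x3 * x2 * x1)) := by rw [hD_eq]
      _ = x2⁻¹ * x3 * x2 * (x4 * x3 * x2 * x1) := by group
  have key : (x4 * x3 * x2 * x1) * x3 * x2 * x3 * x2⁻¹ * x3⁻¹ = x3 * (x4 * x3 * x2 * x1) := by
    calc (x4 * x3 * x2 * x1) * x3 * x2 * x3 * x2⁻¹ * x3⁻¹
        = x2 * ((x4 * x3 * x2 * x1) * x3) * (x3 * x2⁻¹ * x3⁻¹) := by rw [hC]; group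
      _ = x2 * (x2⁻¹ * x3 * x2 * (x4 * x3 * x2 * x1)) * (x3 * x2⁻¹ * x3⁻¹) := by rw [hphi3]
      _ = x3 * x2 * ((x4 * x3 * x2 * x1) * x3) * (x2⁻¹ * x3⁻¹) := by group
      _ = x3 * x2 * (x2⁻¹ * x3 * x2 * (x4 * x3 * x2 * x1)) * (x2⁻¹ * x3⁻¹) := by rw [hphi3]
      _ = x3 * (x3 * x2 * (x4 * x3 * x2 * x1)) * (x2⁻¹ * x3⁻¹) := by group
      _ = x3 * (x4 * x3 * x2 * x1 * (x3 * x2)) * (x2⁻¹ * x3⁻¹) := by rw [hD_eq]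
      _ = x3 * (x4 * x3 * x2 * x1) := by group
  calc x3 = (x4 * x3 * x2 * x1) * x3 * x2 * x3 * x2⁻¹ * x3⁻¹ * (x4 * x3 * x2 * x1)⁻¹ := by
        rw [key]; group
    _ = x4 * x3 * x2 * x1 * x3 * x2 * x3 * x2⁻¹ * x3⁻¹ * x1⁻¹ * x2⁻¹ * x3⁻¹ * x4⁻¹ := by group
end

section
/- Let G be a group and x1, x2, x3, x4, x5, x6 ∈ G. Then the six relations x1 = x5 x4 x5⁻¹, x2 = x5 x4 x3 x2 x3⁻¹ x4⁻¹ x5⁻¹, x3 = x5 x4 x3 x2 x3 x2⁻¹ x3⁻¹ x4⁻¹ x5⁻¹, x4 = x5 x4 x3 x2 x1 x2⁻¹ x3⁻¹ x4⁻¹ x5⁻¹, x5 = x6, and x6 = x6 x5 x4 x3 x2 x1 x5 x1⁻¹ x2⁻¹ x3⁻¹ x4⁻¹ x5⁻¹ x6⁻¹ hold simultaneously if and only if the relations x5 x4 x3 x2 = x2 x5 x4 x3 = x3 x2 x5 x4, x4 x5 x4 x3 x2 x5 = x5 x4 x3 x2 x5 x4, x1 = x5 x4 x5⁻¹, and x5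 = x6 hold. -/
theorem stmt_17 {G : Type*} [Group G] (x1 x2 x3 x4 x5 x6 : G) :
    (x1 = x5 * x4 * x5⁻¹ ∧
     x2 = x5 * x4 * x3 * x2 * x3⁻¹ * x4⁻¹ * x5⁻¹ ∧
     x3 = x5 * x4 * x3 * x2 * x3 * x2⁻¹ * x3⁻¹ * x4⁻¹ * x5⁻¹ ∧
     x4 = x5 * x4 * x3 * x2 * x1 * x2⁻¹ * x3⁻¹ * x4⁻¹ * x5⁻¹ ∧
     x5 = x6 ∧
     x6 = x6 * x5 * x4 * x3 * x2 * x1 * x5 * x1⁻¹ * x2⁻¹ * x3⁻¹ * x4⁻¹ * x5⁻¹ * x6⁻¹) ↔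
    (x5 * x4 * x3 * x2 = x2 * x5 * x4 * x3 ∧
     x2 * x5 * x4 * x3 = x3 * x2 * x5 * x4 ∧
     x4 * x5 * x4 * x3 * x2 * x5 = x5 * x4 * x3 * x2 * x5 * x4 ∧
     x1 = x5 * x4 * x5⁻¹ ∧
     x5 = x6) := by
  constructor
  · rintro ⟨h1, h2, h3, h4, h5, h6⟩
    have a : x5 * x4 * x3 * x2 = x2 * x5 * x4 * x3 := by
      nth_rewrite 2 [h2]
      group
    have c3 : x5 * x4 * x3 * x2 * x3 = x3 * (x5 * x4 * x3 * x2) := by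
      nth_rewrite 3 [h3]
      group
    have b : x2 * x5 * x4 * x3 = x3 * x2 * x5 * x4 := by
      rw [a] at c3
      exact mul_right_cancel (c3.trans (by group))
    have c : x4 * x5 * x4 * x3 * x2 * x5 = x5 * x4 * x3 * x2 * x5 * x4 := by
      rw [h1] at h4
      nth_rewrite 1 [h4]
      group
    exact ⟨a, b, c, h1, h5⟩
  · rintro ⟨a, b, c, h1, h5⟩
    refine ⟨h1, ?_, ?_, ?_, h5, ?_⟩
    · rw [a]; group
    · have c3 : x5 * x4 * x3 * x2 * x3 = x3 * (x5 * x4 * x3 * x2) := by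
        rw [a]
        nth_rewrite 1 [b]
        group
      rw [c3]; group
    · rw [h1]
      calc x4 = (x4 * (x5*x4*x3*x2*x5)) * (x5*x4*x3*x2*x5)⁻¹ := by group
      _ = (x5*x4*x3*x2*x5*x4) * (x5*x4*x3*x2*x5)⁻¹ := by
          rw [show x4 * (x5*x4*x3*x2*x5) = x4*x5*x4*x3*x2*x5 by group, c]
      _ = x5 * x4 * x3 * x2 * (x5 * x4 * x5⁻¹) * x2⁻¹ * x3⁻¹ * x4⁻¹ * x5⁻¹ := by group
    · have C2 : Commute (x5*x4*x3*x2) x2 := by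
        unfold Commute SemiconjBy
        calc (x5*x4*x3*x2) * x2 = (x2*x5*x4*x3) * x2 := by rw [← a]
        _ = x2 * (x5*x4*x3*x2) := by group
      have C3 : Commute (x5*x4*x3*x2) x3 := by
        unfold Commute SemiconjBy
        calc (x5*x4*x3*x2) * x3 = (x2*x5*x4*x3) * x3 := by nth_rewrite 1 [a]; group
        _ = (x3*x2*x5*x4) * x3 := by rw [b]
        _ = x3 * (x5*x4*x3*x2) := by nth_rewrite 1 [a]; group
      have C23 : Commute (x5*x4*x3*x2) (x3*x2) := C3.mul_right C2
      have C54 : Commute (x5*x4*x3*x2) (x5*x4) := by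
        have h := (Commute.refl (x5*x4*x3*x2)).mul_right C23.inv_right
        have e : (x5*x4*x3*x2) * (x3*x2)⁻¹ = x5*x4 := by group
        rwa [e] at h
      have C45 : x4 * (x5*x4*x3*x2*x5) = (x5*x4*x3*x2*x5) * x4 := by
        calc x4 * (x5*x4*x3*x2*x5) = x4*x5*x4*x3*x2*x5 := by group
        _ = x5*x4*x3*x2*x5*x4 := c
        _ = (x5*x4*x3*x2*x5) * x4 := by group
      have step : x4 * (x5*x4*x3*x2) * x5 * x5 = x5 * (x5*x4*x3*x2) * x5 * x4 := by
        calc x4 * (x5*x4*x3*x2) * x5 * x5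
            = (x4 * (x5*x4*x3*x2*x5)) * x5 := by group
        _ = ((x5*x4*x3*x2*x5) * x4) * x5 := by rw [C45]
        _ = (x5*x4*x3*x2) * (x5*x4) * x5 := by group
        _ = (x5*x4) * (x5*x4*x3*x2) * x5 := by rw [← C54.eq]
        _ = x5 * (x4 * (x5*x4*x3*x2*x5)) := by group
        _ = x5 * ((x5*x4*x3*x2*x5) * x4) := by rw [C45]
        _ = x5 * (x5*x4*x3*x2) * x5 * x4 := by group
      have K : (x5*x4*x3*x2) * (x5*x4*x5*x4⁻¹*x5⁻¹) = x5 * (x5*x4*x3*x2) := by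
        calc (x5*x4*x3*x2) * (x5*x4*x5*x4⁻¹*x5⁻¹)
            = ((x5*x4*x3*x2*x5) * x4) * (x5*x4⁻¹*x5⁻¹) := by group
        _ = (x4 * (x5*x4*x3*x2*x5)) * (x5*x4⁻¹*x5⁻¹) := by rw [← C45]
        _ = (x4 * (x5*x4*x3*x2) * x5 * x5) * (x4⁻¹*x5⁻¹) := by group
        _ = (x5 * (x5*x4*x3*x2) * x5 * x4) * (x4⁻¹*x5⁻¹) := by rw [step]
        _ = x5 * (x5*x4*x3*x2) := by group
      rw [h1]
      calc x6 = x6 * (x5 * (x5*x4*x3*x2)) * (x5*x4*x3*x2)⁻¹ * x6⁻¹ := by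
            rw [← h5]; group
      _ = x6 * ((x5*x4*x3*x2) * (x5*x4*x5*x4⁻¹*x5⁻¹)) * (x5*x4*x3*x2)⁻¹ * x6⁻¹ := by
            rw [K]
      _ = x6 * x5 * x4 * x3 * x2 * (x5*x4*x5⁻¹) * x5 * (x5*x4*x5⁻¹)⁻¹ * x2⁻¹ * x3⁻¹ * x4⁻¹ * x5⁻¹ * x6⁻¹ := by
            group
end

section
/- Let G be a group and x1, x2, x3, x4, x5, x6 ∈ G. If x1 = x5 x4 x5⁻¹, x2 = x5 x4 x3 x2 x3⁻¹ x4⁻¹ x5⁻¹, x3 = x5 x4 x3 x2 x3 x2⁻¹ x3⁻¹ x4⁻¹ x5⁻¹, x4 = x5 x4 x3 x2 x1 x2⁻¹ x3⁻¹ x4⁻¹ x5⁻¹, and x5 = x6, then x6 = x6 x5 x4 x3 x2 x1 x5 x1⁻¹ x2⁻¹ x3⁻¹ x4⁻¹ x5⁻¹ x6⁻¹ (i.e., the sixth van Kampen relation is redundant). -/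
theorem stmt_18 {G : Type*} [Group G] (x1 x2 x3 x4 x5 x6 : G)
    (h1 : x1 = x5 * x4 * x5⁻¹)
    (h2 : x2 = x5 * x4 * x3 * x2 * x3⁻¹ * x4⁻¹ * x5⁻¹)
    (h3 : x3 = x5 * x4 * x3 * x2 * x3 * x2⁻¹ * x3⁻¹ * x4⁻¹ * x5⁻¹)
    (h4 : x4 = x5 * x4 * x3 * x2 * x1 * x2⁻¹ * x3⁻¹ * x4⁻¹ * x5⁻¹)
    (h5 : x5 = x6) :
    x6 = x6 * x5 * x4 * x3 * x2 * x1 * x5 * x1⁻¹ * x2⁻¹ * x3⁻¹ * x4⁻¹ * x5⁻¹ * x6⁻¹ := by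
  subst h5
  -- u := x5*x4*x3 commutes with x2
  have hu : (x5*x4*x3) * x2 = x2 * (x5*x4*x3) := by
    nth_rewrite 2 [h2]; group
  have hu' : (x5*x4*x3) * x2⁻¹ = x2⁻¹ * (x5*x4*x3) := by
    calc (x5*x4*x3) * x2⁻¹ = x2⁻¹ * (x2 * (x5*x4*x3)) * x2⁻¹ := by group
      _ = x2⁻¹ * ((x5*x4*x3) * x2) * x2⁻¹ := by rw [hu]
      _ = x2⁻¹ * (x5*x4*x3) := by group
  have hu'' : x2⁻¹ * (x5*x4*x3)⁻¹ = (x5*x4*x3)⁻¹ * x2⁻¹ := by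
    calc x2⁻¹ * (x5*x4*x3)⁻¹ = ((x5*x4*x3) * x2)⁻¹ := by group
      _ = (x2 * (x5*x4*x3))⁻¹ := by rw [hu]
      _ = (x5*x4*x3)⁻¹ * x2⁻¹ := by group
  -- conjugation of x3 by u
  have e1 : x3 = ((x5*x4*x3)*x2) * x3 * ((x5*x4*x3)*x2)⁻¹ := by
    conv_lhs => rw [h3]
    group
  rw [hu] at e1
  have hC : (x5*x4*x3)*x3*(x5*x4*x3)⁻¹ = x2⁻¹*x3*x2 := by
    conv_rhs => rw [e1]
    group
  have hCinv : (x5*x4*x3)*x3⁻¹*(x5*x4*x3)⁻¹ = x2⁻¹*x3⁻¹*x2 := by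
    calc (x5*x4*x3)*x3⁻¹*(x5*x4*x3)⁻¹ = ((x5*x4*x3)*x3*(x5*x4*x3)⁻¹)⁻¹ := by group
      _ = (x2⁻¹*x3*x2)⁻¹ := by rw [hC]
      _ = x2⁻¹*x3⁻¹*x2 := by group
  -- conjugation of x1 = x5*x4*x5⁻¹ by u
  have f1 : x4 = ((x5*x4*x3)*x2) * x1 * ((x5*x4*x3)*x2)⁻¹ := by
    conv_lhs => rw [h4]
    group
  rw [hu, h1] at f1
  have hD : (x5*x4*x3)*(x5*x4*x5⁻¹)*(x5*x4*x3)⁻¹ = x2⁻¹*x4*x2 := by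
    conv_rhs => rw [f1]
    group
  -- conjugation of x5 by u
  have hA : (x5*x4*x3)*x5*(x5*x4*x3)⁻¹ = x2⁻¹*x4⁻¹*x5*x4*x2 := by
    calc (x5*x4*x3)*x5*(x5*x4*x3)⁻¹
        = ((x5*x4*x3)*(x5*x4*x5⁻¹)*(x5*x4*x3)⁻¹)⁻¹ *
            ((x5*x4*x3)*((x5*x4*x3)*x3⁻¹*(x5*x4*x3)⁻¹)) := by group
      _ = (x2⁻¹*x4*x2)⁻¹ * ((x5*x4*x3)*(x2⁻¹*x3⁻¹*x2)) := by rw [hD, hCinv]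
      _ = (x2⁻¹*x4*x2)⁻¹ * (((x5*x4*x3)*x2⁻¹)*(x3⁻¹*x2)) := by group
      _ = (x2⁻¹*x4*x2)⁻¹ * ((x2⁻¹*(x5*x4*x3))*(x3⁻¹*x2)) := by rw [hu']
      _ = x2⁻¹*x4⁻¹*x5*x4*x2 := by group
  -- conjugation of x4 by u
  have hB : (x5*x4*x3)*x4*(x5*x4*x3)⁻¹ = x2⁻¹*x4⁻¹*x5⁻¹*x4*x5*x4*x2 := by
    calc (x5*x4*x3)*x4*(x5*x4*x3)⁻¹
        = ((x5*x4*x3)*x5*(x5*x4*x3)⁻¹)⁻¹ *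
            ((x5*x4*x3)*(x5*x4*x5⁻¹)*(x5*x4*x3)⁻¹) *
            ((x5*x4*x3)*x5*(x5*x4*x3)⁻¹) := by group
      _ = (x2⁻¹*x4⁻¹*x5*x4*x2)⁻¹ * (x2⁻¹*x4*x2) * (x2⁻¹*x4⁻¹*x5*x4*x2) := by
            rw [hA, hD]
      _ = x2⁻¹*x4⁻¹*x5⁻¹*x4*x5*x4*x2 := by group
  -- key conjugation identity
  have hKey : (x5*x4*x3)*(x5*x4*x5*x4⁻¹*x5⁻¹)*(x5*x4*x3)⁻¹ = x2⁻¹*x5*x2 := by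
    calc (x5*x4*x3)*(x5*x4*x5*x4⁻¹*x5⁻¹)*(x5*x4*x3)⁻¹
        = ((x5*x4*x3)*x5*(x5*x4*x3)⁻¹) * ((x5*x4*x3)*x4*(x5*x4*x3)⁻¹) *
            ((x5*x4*x3)*x5*(x5*x4*x3)⁻¹) * ((x5*x4*x3)*x4*(x5*x4*x3)⁻¹)⁻¹ *
            ((x5*x4*x3)*x5*(x5*x4*x3)⁻¹)⁻¹ := by group
      _ = (x2⁻¹*x4⁻¹*x5*x4*x2) * (x2⁻¹*x4⁻¹*x5⁻¹*x4*x5*x4*x2) *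
            (x2⁻¹*x4⁻¹*x5*x4*x2) * (x2⁻¹*x4⁻¹*x5⁻¹*x4*x5*x4*x2)⁻¹ *
            (x2⁻¹*x4⁻¹*x5*x4*x2)⁻¹ := by rw [hA, hB]
      _ = x2⁻¹*x5*x2 := by group
  -- conclude
  rw [h1]
  symm
  calc x5*x5*x4*x3*x2*(x5*x4*x5⁻¹)*x5*(x5*x4*x5⁻¹)⁻¹*x2⁻¹*x3⁻¹*x4⁻¹*x5⁻¹*x5⁻¹
      = x5*(((x5*x4*x3)*x2)*(x5*x4*x5*x4⁻¹*x5⁻¹)*(x2⁻¹*(x5*x4*x3)⁻¹))*x5⁻¹ := by group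
    _ = x5*((x2*(x5*x4*x3))*(x5*x4*x5*x4⁻¹*x5⁻¹)*((x5*x4*x3)⁻¹*x2⁻¹))*x5⁻¹ := by
        rw [hu, hu'']
    _ = x5*(x2*((x5*x4*x3)*(x5*x4*x5*x4⁻¹*x5⁻¹)*(x5*x4*x3)⁻¹)*x2⁻¹)*x5⁻¹ := by group
    _ = x5*(x2*(x2⁻¹*x5*x2)*x2⁻¹)*x5⁻¹ := by rw [hKey]
    _ = x5 := by group
end
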